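/- Let d = 1, R an odd integer with |R| ≥ 3, a ∈ ℝ \ {0}, B = {0, a}, and μ the probability measure satisfying μ = (1/2)(μ∘σ_0^{-1} + μ∘σ_a^{-1}) with σ_b(x) = x/R + b. Then L²(μ) has no orthonormal basis of exponentials: there is no set Λ ⊂ ℝ such that {e^{2πiλx} : λ ∈ Λ} is an orthonormal basis of L²(μ). -/

import Mathlib

/-!
The Fourier transform of `μ` satisfies `μ̂(t) = ½ (1 + e^{iat}) μ̂(t/R)`, hence
`|μ̂(t)| = |cos (at/2)| |μ̂(t/R)|`. As `μ̂(t/R^k) → 1`, `μ̂(2πs)` vanishes exactly when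
`2as = R^k m` with `m` odd, which for odd `R` says that `2as` is an odd integer; and
`|μ̂(t)| = 1` forces `t = 0`.

Orthogonality therefore puts distinct points of `Λ` at odd multiples of `1/(2a)` from each other.
Fix `l ∈ Λ` and `ξ = l + 1/a`. Every `λ ∈ Λ \ {l}` is then also at an odd multiple of `1/(2a)`
from `ξ`, so Parseval's identity `∑_{λ ∈ Λ} |μ̂(2π(ξ - λ))|² = ‖e_ξ‖² = 1` collapses to
`|μ̂(2π/a)| = 1`, which is impossible.
-/

open MeasureTheory Real ENNReal

noncomputable section

/-- `{e^{2πiλx} : λ ∈ Λ}` is an orthonormal basis of `L²(μ)`: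
the exponentials are orthonormal and their orthogonal complement is trivial. -/
def IsExpONB (μ : Measure ℝ) (Λ : Set ℝ) : Prop :=
  (∀ lam ∈ Λ, ∀ lam' ∈ Λ,
    ∫ x, (starRingEnd ℂ) (Complex.exp (2 * π * Complex.I * lam * x)) *
      Complex.exp (2 * π * Complex.I * lam' * x) ∂μ
      = if lam = lam' then 1 else 0) ∧
  (∀ g : Lp ℂ 2 μ,
    (∀ lam ∈ Λ,
      ∫ x, (starRingEnd ℂ) (Complex.exp (2 * π * Complex.I * lam * x)) *
        (g : ℝ → ℂ) x ∂μ = 0) → g = 0)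

open Complex Filter Topology
open scoped ComplexConjugate

section CharFun

variable {E : Type*} [SeminormedAddCommGroup E] [InnerProductSpace ℝ E] [MeasurableSpace E]

lemma charFun_smul_measure (c : ℝ≥0∞) (ν : Measure E) (t : E) :
    charFun (c • ν) t = c.toReal • charFun ν t := by
  simp only [charFun_apply, integral_smul_measure]

lemma charFun_add_measure [OpensMeasurableSpace E] (ν₁ ν₂ : Measure E) [IsFiniteMeasure ν₁]
    [IsFiniteMeasure ν₂] (t : E) : charFun (ν₁ + ν₂) t = charFun ν₁ t + charFun ν₂ t := by
  simp only [charFun_eq_integral_innerProbChar]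
  exact integral_add_measure ((BoundedContinuousFunction.innerProbChar t).integrable _)
    ((BoundedContinuousFunction.innerProbChar t).integrable _)

end CharFun

lemma tendsto_div_pow {R : ℝ} (hR : 1 < |R|) (t : ℝ) :
    Tendsto (fun k : ℕ => t / R ^ k) atTop (𝓝 0) := by
  have hR' : |R⁻¹| < 1 := by rw [abs_inv]; exact inv_lt_one_of_one_lt₀ hR
  simpa [div_eq_mul_inv] using (tendsto_pow_atTop_nhds_zero_of_abs_lt_one hR').const_mul t

lemma tendsto_charFun_div_pow (μ : Measure ℝ) [IsProbabilityMeasure μ] {R : ℝ} (hR : 1 < |R|)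
    (t : ℝ) : Tendsto (fun k : ℕ => charFun μ (t / R ^ k)) atTop (𝓝 1) := by
  have h := (continuous_charFun (μ := μ)).tendsto 0
  rw [charFun_zero, probReal_univ, Complex.ofReal_one] at h
  exact h.comp (tendsto_div_pow hR t)

lemma one_add_exp_mul_I (θ : ℝ) :
    1 + cexp (θ * I) = 2 * Real.cos (θ / 2) * cexp (↑(θ / 2) * I) := by
  have h₁ : cexp (↑(θ / 2) * I) * cexp (↑(θ / 2) * I) = cexp (θ * I) := by
    rw [← Complex.exp_add]; push_cast; ring_nf
  have h₂ : cexp (-↑(θ / 2) * I) * cexp (↑(θ / 2) * I) = 1 := by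
    rw [← Complex.exp_add, neg_mul, neg_add_cancel, Complex.exp_zero]
  rw [ofReal_cos, Complex.cos]
  linear_combination -h₁ - h₂

lemma norm_one_add_exp_mul_I_div_two (θ : ℝ) :
    ‖(1 + cexp (θ * I)) / 2‖ = |Real.cos (θ / 2)| := by
  rw [one_add_exp_mul_I, mul_div_right_comm, mul_div_cancel_left₀ _ two_ne_zero, norm_mul,
    norm_exp_ofReal_mul_I, mul_one, norm_real, Real.norm_eq_abs]

section ExponentialBasis

variable {μ : Measure ℝ} {Λ : Set ℝ}

lemma norm_exp_two_pi_I_mul (t x : ℝ) : ‖cexp (2 * π * I * t * x)‖ = 1 := by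
  rw [show (2 * π * I * t * x : ℂ) = ↑(2 * π * t * x) * I by push_cast; ring,
    norm_exp_ofReal_mul_I]

lemma memLp_exp_two_pi_I_mul [IsFiniteMeasure μ] (t : ℝ) :
    MemLp (fun x : ℝ => cexp (2 * π * I * t * x)) 2 μ :=
  MemLp.of_bound (by fun_prop) 1 (ae_of_all _ fun x => (norm_exp_two_pi_I_mul t x).le)

lemma conj_exp_two_pi_I_mul_mul_exp (s t x : ℝ) :
    conj (cexp (2 * π * I * s * x)) * cexp (2 * π * I * t * x) =
      cexp (↑(2 * π * (t - s)) * x * I) := by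
  rw [← exp_conj, ← Complex.exp_add]
  congr 1
  simp only [map_mul, conj_ofReal, conj_I, map_ofNat]
  push_cast
  ring

lemma integral_conj_exp_mul_exp (s t : ℝ) :
    ∫ x, conj (cexp (2 * π * I * s * x)) * cexp (2 * π * I * t * x) ∂μ =
      charFun μ (2 * π * (t - s)) := by
  simp_rw [conj_exp_two_pi_I_mul_mul_exp, charFun_apply_real]

lemma IsExpONB.charFun_eq_zero (h : IsExpONB μ Λ) {l l' : ℝ} (hl : l ∈ Λ) (hl' : l' ∈ Λ)
    (hne : l ≠ l') : charFun μ (2 * π * (l' - l)) = 0 := by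
  rw [← integral_conj_exp_mul_exp, h.1 l hl l' hl', if_neg hne]

variable [IsFiniteMeasure μ]

def expLp (μ : Measure ℝ) [IsFiniteMeasure μ] (t : ℝ) : Lp ℂ 2 μ :=
  (memLp_exp_two_pi_I_mul t).toLp _

lemma inner_expLp (t : ℝ) (g : Lp ℂ 2 μ) :
    inner ℂ (expLp μ t) g = ∫ x, conj (cexp (2 * π * I * t * x)) * g x ∂μ := by
  rw [L2.inner_def]
  refine integral_congr_ae ?_
  filter_upwards [(memLp_exp_two_pi_I_mul (μ := μ) t).coeFn_toLp] with x hx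
  rw [expLp, hx, RCLike.inner_apply, mul_comm]

lemma inner_expLp_expLp (s t : ℝ) :
    inner ℂ (expLp μ s) (expLp μ t) = charFun μ (2 * π * (t - s)) := by
  rw [inner_expLp, ← integral_conj_exp_mul_exp]
  refine integral_congr_ae ?_
  filter_upwards [(memLp_exp_two_pi_I_mul (μ := μ) t).coeFn_toLp] with x hx
  rw [expLp, hx]

namespace IsExpONB

lemma orthonormal_expLp (h : IsExpONB μ Λ) : Orthonormal ℂ fun l : Λ => expLp μ l := by
  classical
  rw [orthonormal_iff_ite]
  intro l l'
  rw [inner_expLp_expLp, ← integral_conj_exp_mul_exp, h.1 l l.2 l' l'.2]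
  exact if_congr Subtype.ext_iff.symm rfl rfl

lemma orthogonal_span_expLp_eq_bot (h : IsExpONB μ Λ) :
    (Submodule.span ℂ (Set.range fun l : Λ => expLp μ l))ᗮ = ⊥ := by
  refine (Submodule.eq_bot_iff _).2 fun g hg => h.2 g fun l hl => ?_
  rw [← inner_expLp]
  exact Submodule.inner_right_of_mem_orthogonal
    (Submodule.subset_span (Set.mem_range_self (⟨l, hl⟩ : Λ))) hg

lemma hasSum_norm_charFun_sq [IsProbabilityMeasure μ] (h : IsExpONB μ Λ) (ξ : ℝ) :
    HasSum (fun l : Λ => ‖charFun μ (2 * π * (ξ - l))‖ ^ 2) 1 := by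
  have parseval := (HilbertBasis.mkOfOrthogonalEqBot h.orthonormal_expLp
    h.orthogonal_span_expLp_eq_bot).hasSum_inner_mul_inner (expLp μ ξ) (expLp μ ξ)
  have conj_mul_self (l : ℝ) : charFun μ (2 * π * (l - ξ)) * charFun μ (2 * π * (ξ - l)) =
      ((‖charFun μ (2 * π * (ξ - l))‖ ^ 2 : ℝ) : ℂ) := by
    rw [show 2 * π * (l - ξ) = -(2 * π * (ξ - l)) by ring, charFun_neg, conj_mul',
      Complex.ofReal_pow]
  simp only [HilbertBasis.coe_mkOfOrthogonalEqBot, inner_expLp_expLp, conj_mul_self, sub_self,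
    mul_zero, charFun_zero, probReal_univ] at parseval
  exact_mod_cast parseval

lemma nonempty [IsProbabilityMeasure μ] (h : IsExpONB μ Λ) : Λ.Nonempty := by
  rw [Set.nonempty_iff_ne_empty]
  rintro rfl
  exact one_ne_zero ((h.hasSum_norm_charFun_sq 0).unique hasSum_empty)

end IsExpONB

end ExponentialBasis

def IsBernoulliConvolution (R a : ℝ) (μ : Measure ℝ) : Prop :=
  μ = (1/2 : ℝ≥0∞) • (μ.map (fun x => x / R) + μ.map (fun x => x / R + a))

namespace IsBernoulliConvolution

variable {R a : ℝ} {μ : Measure ℝ}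

lemma charFun_eq [IsFiniteMeasure μ] (hμ : IsBernoulliConvolution R a μ) (t : ℝ) :
    charFun μ t = (1 + cexp (↑(a * t) * I)) / 2 * charFun μ (t / R) := by
  have hdiv : (fun x : ℝ => x / R) = (R⁻¹ * ·) := by funext x; rw [div_eq_inv_mul]
  have hshift : μ.map (fun x => x / R + a) = (μ.map (R⁻¹ * ·)).map (· + a) := by
    rw [Measure.map_map (by fun_prop) (by fun_prop), ← hdiv]; rfl
  nth_rw 1 [hμ]
  rw [charFun_smul_measure, hshift, ← hdiv, charFun_add_measure, charFun_map_add_const, hdiv,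
    charFun_map_mul, div_eq_inv_mul t R, RCLike.inner_apply, conj_trivial, mul_comm t a]
  simp only [one_div, ENNReal.toReal_inv, ENNReal.toReal_ofNat, Complex.real_smul]
  push_cast
  ring

lemma norm_charFun_eq [IsFiniteMeasure μ] (hμ : IsBernoulliConvolution R a μ) (t : ℝ) :
    ‖charFun μ t‖ = |Real.cos (a * t / 2)| * ‖charFun μ (t / R)‖ := by
  rw [hμ.charFun_eq, norm_mul, norm_one_add_exp_mul_I_div_two]

lemma charFun_eq_zero_of_cos_eq_zero [IsFiniteMeasure μ] (hμ : IsBernoulliConvolution R a μ)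
    {t : ℝ} (h : Real.cos (a * t / 2) = 0) : charFun μ t = 0 := by
  rw [← norm_eq_zero, hμ.norm_charFun_eq, h, abs_zero, zero_mul]

variable [IsProbabilityMeasure μ]

lemma exists_cos_eq_zero_of_charFun_eq_zero (hμ : IsBernoulliConvolution R a μ) (hR : 1 < |R|)
    {t : ℝ} (h : charFun μ t = 0) : ∃ k : ℕ, Real.cos (a * (t / R ^ k) / 2) = 0 := by
  by_contra! hcos
  have hzero (k : ℕ) : charFun μ (t / R ^ k) = 0 := by
    induction k with
    | zero => simpa using h
    | succ k ih =>
      have hk := hμ.norm_charFun_eq (t / R ^ k)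
      rw [ih, norm_zero, div_div, ← pow_succ] at hk
      exact norm_eq_zero.1 ((mul_eq_zero.1 hk.symm).resolve_left (abs_ne_zero.2 (hcos k)))
  have hlim := tendsto_charFun_div_pow μ hR t
  simp only [hzero, tendsto_const_nhds_iff] at hlim
  exact zero_ne_one hlim

lemma abs_cos_eq_one_of_norm_charFun_eq_one (hμ : IsBernoulliConvolution R a μ) {t : ℝ}
    (h : ‖charFun μ t‖ = 1) : |Real.cos (a * t / 2)| = 1 ∧ ‖charFun μ (t / R)‖ = 1 := by
  rw [hμ.norm_charFun_eq] at h
  have hc := Real.abs_cos_le_one (a * t / 2)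
  have hF := norm_charFun_le_one (μ := μ) (t / R)
  constructor <;> nlinarith [abs_nonneg (Real.cos (a * t / 2)), norm_nonneg (charFun μ (t / R))]

lemma eq_zero_of_norm_charFun_eq_one (hμ : IsBernoulliConvolution R a μ) (ha : a ≠ 0)
    (hR : 1 < |R|) {t : ℝ} (h : ‖charFun μ t‖ = 1) : t = 0 := by
  have hnorm (k : ℕ) : ‖charFun μ (t / R ^ k)‖ = 1 := by
    induction k with
    | zero => simpa using h
    | succ k ih =>
      simpa [div_div, pow_succ] using (hμ.abs_cos_eq_one_of_norm_charFun_eq_one ih).2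
  have hsin (k : ℕ) : Real.sin (a * (t / R ^ k) / 2) = 0 :=
    Real.sin_eq_zero_iff_cos_eq.2 <| (abs_eq zero_le_one).1
      (hμ.abs_cos_eq_one_of_norm_charFun_eq_one (hnorm k)).1
  have htend : Tendsto (fun k : ℕ => a * (t / R ^ k) / 2) atTop (𝓝 0) := by
    simpa using ((tendsto_div_pow hR t).const_mul a).div_const 2
  obtain ⟨k, hk⟩ := (htend.eventually (Ioo_mem_nhds (neg_neg_of_pos pi_pos) pi_pos)).exists
  have hR0 : R ≠ 0 := by rintro rfl; norm_num at hR
  simpa [ha, hR0] using (Real.sin_eq_zero_iff_of_lt_of_lt hk.1 hk.2).1 (hsin k)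

lemma charFun_two_pi_mul_eq_zero_iff {R : ℤ} (hμ : IsBernoulliConvolution R a μ) (hodd : Odd R)
    (hR : 1 < |R|) {s : ℝ} : charFun μ (2 * π * s) = 0 ↔ ∃ n : ℤ, Odd n ∧ 2 * a * s = n := by
  constructor
  · intro h
    obtain ⟨k, hk⟩ := hμ.exists_cos_eq_zero_of_charFun_eq_zero (by exact_mod_cast hR) h
    obtain ⟨m, hm⟩ := Real.cos_eq_zero_iff.1 hk
    refine ⟨R ^ k * (2 * m + 1), hodd.pow.mul (odd_two_mul_add_one m), ?_⟩
    have hRk : (R : ℝ) ^ k ≠ 0 := pow_ne_zero _ (by exact_mod_cast (by rintro rfl; simp at hR))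
    field_simp at hm
    push_cast
    linear_combination hm
  · rintro ⟨_, ⟨m, rfl⟩, hn⟩
    refine hμ.charFun_eq_zero_of_cos_eq_zero (Real.cos_eq_zero_iff.2 ⟨m, ?_⟩)
    push_cast at hn
    linear_combination π / 2 * hn

end IsBernoulliConvolution

/-- For odd `R` with `|R| ≥ 3` and any `a ≠ 0`, the self-similar measure of the IFS
`{x/R, x/R + a}` with equal weights admits no orthonormal basis of exponentials. -/
theorem no_exponential_basis_odd_scale
    (R : ℤ) (hodd : Odd R) (hR : 3 ≤ |R|) (a : ℝ) (ha : a ≠ 0)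
    (μ : Measure ℝ) (hP : IsProbabilityMeasure μ)
    (hμ : μ = (1/2 : ℝ≥0∞) • (μ.map (fun x => x / (R : ℝ)) +
      μ.map (fun x => x / (R : ℝ) + a))) :
    ¬ ∃ Λ : Set ℝ, IsExpONB μ Λ := by
  rintro ⟨Λ, hΛ⟩
  have hμ' : IsBernoulliConvolution R a μ := hμ
  have hR' : 1 < |R| := by omega
  have hzero (s : ℝ) := hμ'.charFun_two_pi_mul_eq_zero_iff (s := s) hodd hR'
  obtain ⟨l, hl⟩ := hΛ.nonempty
  have hvanish (l' : Λ) (hne : l' ≠ ⟨l, hl⟩) :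
      ‖charFun μ (2 * π * (l + 1 / a - l'))‖ ^ 2 = 0 := by
    obtain ⟨n, hn, hdist⟩ := (hzero _).1
      (hΛ.charFun_eq_zero hl l'.2 (Subtype.coe_ne_coe.2 hne).symm)
    rw [(hzero _).2 ⟨2 - n, even_two.sub_odd hn, ?_⟩]
    · simp
    · push_cast
      field_simp
      linear_combination -hdist
  have hsum := (hΛ.hasSum_norm_charFun_sq (l + 1 / a)).unique (hasSum_single _ hvanish)
  rw [add_sub_cancel_left, eq_comm, pow_eq_one_iff_of_nonneg (norm_nonneg _) two_ne_zero] at hsum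
  have h1a := hμ'.eq_zero_of_norm_charFun_eq_one ha (by exact_mod_cast hR') hsum
  simp [ha, pi_ne_zero] at h1a

end
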